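/- arXiv:1502.07045 — 2 statements merged into one kernel-verified Lean document; each statement's English description precedes it below -/
import Mathlib

section
/- Let N = (V, A) be a binary phylogenetic network over a finite leaf set X with root ρ. Then N is tree-based if and only if there is an independent set I of arcs of N (no two distinct arcs of I share a vertex, where the vertices of an arc a are its source s(a) and target t(a)) such that the digraph N′ = (V, A − I) is a rooted directed tree with root ρ. -/
/-! Directed multigraphs, walks, and binary phylogenetic networks
(following Francis & Steel, "Which phylogenetic networks are merely
trees with additional arcs?"). -/

universe u1 u2 u3 u4 u5 u6 u7

/-- In-degree of `v`: the number of arcs with target `v`. -/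
noncomputable def InDeg {V : Type u2} {A : Type u3} (t : A → V) (v : V) : ℕ := {a : A | t a = v}.ncard

/-- Out-degree of `v`: the number of arcs with source `v`. -/
noncomputable def OutDeg {V : Type u2} {A : Type u3} (s : A → V) (v : V) : ℕ := {a : A | s a = v}.ncard

/-- In-degree of `v` in the sub-digraph with arc set `A₀`. -/
noncomputable def InDegIn {V : Type u2} {A : Type u3} (t : A → V) (A₀ : Set A) (v : V) : ℕ :=
  {a : A | a ∈ A₀ ∧ t a = v}.ncard

/-- Out-degree of `v` in the sub-digraph with arc set `A₀`. -/
noncomputable def OutDegIn {V : Type u2} {A : Type u3} (s : A → V) (A₀ : Set A) (v : V) : ℕ :=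
  {a : A | a ∈ A₀ ∧ s a = v}.ncard

/-- `ArcWalk s t u p v` : the list of arcs `p` is a directed walk from `u` to `v`
(consecutive arcs are compatible). -/
inductive ArcWalk {V : Type u2} {A : Type u3} (s t : A → V) : V → List A → V → Prop
  | nil (v : V) : ArcWalk s t v [] v
  | cons {u w : V} {a : A} {p : List A} :
      s a = u → ArcWalk s t (t a) p w → ArcWalk s t u (a :: p) w

/-- The digraph `(V, S)` is a rooted directed tree with root `r`: every vertex of `V`
is reachable from `r` by a unique directed path using only arcs in `S`. -/
def IsRootedTree {V : Type u2} {A : Type u3} (s t : A → V) (S : Set A) (r : V) : Prop :=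
  ∀ v : V, ∃! p : List A, (∀ a ∈ p, a ∈ S) ∧ ArcWalk s t r p v

/-- `(V₀, A₀)` is a rooted directed tree with root `r` (as a sub-digraph of the
ambient digraph given by `s`, `t`). -/
def IsRootedTreeOn {V : Type u2} {A : Type u3} (s t : A → V) (V₀ : Set V) (A₀ : Set A)
    (r : V) : Prop :=
  r ∈ V₀ ∧ (∀ a ∈ A₀, s a ∈ V₀ ∧ t a ∈ V₀) ∧
    ∀ v ∈ V₀, ∃! p : List A, (∀ a ∈ p, a ∈ A₀) ∧ ArcWalk s t r p v

/-- A set of arcs is independent if no two distinct arcs of it share a vertex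
(the vertices of an arc `a` being `s a` and `t a`). -/
def IndepArcs {V : Type u2} {A : Type u3} (s t : A → V) (I : Set A) : Prop :=
  ∀ a ∈ I, ∀ b ∈ I, a ≠ b → s a ≠ s b ∧ s a ≠ t b ∧ t a ≠ s b ∧ t a ≠ t b

/-- A binary phylogenetic network over the (finite) leaf set `X`: a finite acyclic
directed multigraph whose out-degree-0 vertices are exactly the (images of the)
elements of `X`, each leaf has in-degree 1, there is a unique in-degree-0 vertex
(the root) of out-degree 1 or 2, and every other vertex has in-degree 2 and
out-degree 1, or in-degree 1 and out-degree 2. -/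
structure PhyloNetwork (X : Type u1) (V : Type u2) (A : Type u3) where
  src : A → V
  tgt : A → V
  leafEmb : X → V
  root : V
  finV : Finite V
  finA : Finite A
  leafEmb_inj : Function.Injective leafEmb
  acyclic : ∀ (v : V) (p : List A), p ≠ [] → ¬ ArcWalk src tgt v p v
  leaf_iff : ∀ v : V, (∃ x : X, leafEmb x = v) ↔ OutDeg src v = 0
  leaf_indeg : ∀ x : X, InDeg tgt (leafEmb x) = 1
  root_indeg : InDeg tgt root = 0
  root_unique : ∀ v : V, InDeg tgt v = 0 → v = root
  root_outdeg : OutDeg src root = 1 ∨ OutDeg src root = 2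
  deg_other : ∀ v : V, v ≠ root → (¬ ∃ x : X, leafEmb x = v) →
    (InDeg tgt v = 2 ∧ OutDeg src v = 1) ∨ (InDeg tgt v = 1 ∧ OutDeg src v = 2)

namespace PhyloNetwork

variable {X : Type u1} {V : Type u2} {A : Type u3}

/-- The set of leaves of the network (the copy of `X` inside `V`). -/
def leaves (N : PhyloNetwork X V A) : Set V := Set.range N.leafEmb

/-- `S ⊆ A` is a support tree for `N`: the digraph `(V, S)` is a rooted directed
tree with root `N.root` whose out-degree-0 vertices are exactly the leaves. -/
def IsSupportTree (N : PhyloNetwork X V A) (S : Set A) : Prop :=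
  IsRootedTree N.src N.tgt S N.root ∧
    ∀ v : V, OutDegIn N.src S v = 0 ↔ v ∈ N.leaves

/-- `N` is tree-based if it has a support tree. -/
def TreeBased (N : PhyloNetwork X V A) : Prop := ∃ S : Set A, N.IsSupportTree S

/-- `S₁`: the arcs whose source has out-degree 1 or whose target has in-degree 1. -/
def S1 (N : PhyloNetwork X V A) : Set A :=
  {a : A | OutDeg N.src (N.src a) = 1 ∨ InDeg N.tgt (N.tgt a) = 1}

/-- `S` is admissible: it contains `S₁`, every in-degree-2 vertex has exactly one
incoming arc in `S` (C₁), and every out-degree-2 vertex has at least one outgoing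
arc in `S` (C₂). -/
def Admissible (N : PhyloNetwork X V A) (S : Set A) : Prop :=
  N.S1 ⊆ S ∧
    (∀ v : V, InDeg N.tgt v = 2 → ∃! a : A, a ∈ S ∧ N.tgt a = v) ∧
    (∀ v : V, OutDeg N.src v = 2 → ∃ a ∈ S, N.src a = v)

/-- An antichain: no directed path from one element to another distinct element. -/
def IsAntichainIn (N : PhyloNetwork X V A) (𝒜 : Set V) : Prop :=
  ∀ u ∈ 𝒜, ∀ v ∈ 𝒜, u ≠ v → ∀ p : List A, ¬ ArcWalk N.src N.tgt u p v

/-- The antichain-to-leaf property: from every antichain of non-leaf vertices there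
is a family of pairwise arc-disjoint directed paths to leaves. -/
def AntichainToLeaf (N : PhyloNetwork X V A) : Prop :=
  ∀ 𝒜 : Set V, (∀ v ∈ 𝒜, v ∉ N.leaves) → N.IsAntichainIn 𝒜 →
    ∃ p : V → List A,
      (∀ v ∈ 𝒜, ∃ w ∈ N.leaves, ArcWalk N.src N.tgt v (p v) w) ∧
      (∀ u ∈ 𝒜, ∀ v ∈ 𝒜, u ≠ v → ∀ a ∈ p u, a ∉ p v)

end PhyloNetwork

/-- The sub-digraph `(V₀, A₀)` of the digraph given by `s, t` is a subdivision of the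
digraph given by `s', t'`, realized by the vertex map `φV`: the vertices of the target
digraph correspond exactly to the vertices of `(V₀, A₀)` that do not have in-degree 1
and out-degree 1, and each target arc corresponds to a directed path of `(V₀, A₀)`
with all internal vertices suppressed, these paths partitioning `A₀`. Equivalently,
the target digraph is obtained from `(V₀, A₀)` by repeatedly suppressing all vertices
of in-degree 1 and out-degree 1. -/
def SubdivOn {V : Type u2} {A : Type u3} {V' : Type u4} {A' : Type u5}
    (s t : A → V) (V₀ : Set V) (A₀ : Set A) (s' t' : A' → V') (φV : V' → V) : Prop :=
  Function.Injective φV ∧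
  (∀ v' : V', φV v' ∈ V₀) ∧
  (∀ a ∈ A₀, s a ∈ V₀ ∧ t a ∈ V₀) ∧
  (∀ v ∈ V₀, v ∈ Set.range φV ↔ ¬ (InDegIn t A₀ v = 1 ∧ OutDegIn s A₀ v = 1)) ∧
  ∃ φA : A' → List A,
    (∀ e : A', φA e ≠ [] ∧ (φA e).Nodup ∧ (∀ a ∈ φA e, a ∈ A₀) ∧
      ArcWalk s t (φV (s' e)) (φA e) (φV (t' e)) ∧
      ∀ a ∈ (φA e).dropLast, t a ∉ Set.range φV) ∧
    (∀ a ∈ A₀, ∃! e : A', a ∈ φA e)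

/-- A rooted binary phylogenetic `X`-tree: a binary phylogenetic network over `X`
with no vertices of in-degree 2. -/
def IsPhyloTree {X : Type u1} {V : Type u2} {A : Type u3}
    (T : PhyloNetwork X V A) : Prop :=
  ∀ v : V, InDeg T.tgt v ≠ 2

/-- `N` is based on the tree `T`: `N` has a support tree `S` such that `(V, S)` is a
subdivision of `T`, matching roots and leaf labels. -/
def BasedOn {X : Type u1} {V : Type u2} {A : Type u3} {V' : Type u4} {A' : Type u5}
    (N : PhyloNetwork X V A) (T : PhyloNetwork X V' A') : Prop :=
  ∃ (S : Set A) (φV : V' → V),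
    N.IsSupportTree S ∧
    SubdivOn N.src N.tgt Set.univ S T.src T.tgt φV ∧
    φV T.root = N.root ∧
    ∀ x : X, φV (T.leafEmb x) = N.leafEmb x

/-- `N` displays the tree `T`: there are `V₀ ⊆ V` and `A₀ ⊆ A` forming a rooted
directed tree whose out-degree-0 vertices are exactly the leaves of `N`, such that
`T` is obtained from `(V₀, A₀)` by repeatedly suppressing vertices of in-degree 1 and
out-degree 1 and deleting the root together with its outgoing arc so long as the root
has out-degree 1 (the deleted root chain is the path `p₀`). -/
def Displays {X : Type u1} {V : Type u2} {A : Type u3} {V' : Type u4} {A' : Type u5}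
    (N : PhyloNetwork X V A) (T : PhyloNetwork X V' A') : Prop :=
  ∃ (V₀ : Set V) (A₀ : Set A) (r₀ : V) (φV : V' → V) (p₀ : List A) (φA : A' → List A),
    IsRootedTreeOn N.src N.tgt V₀ A₀ r₀ ∧
    (∀ v ∈ V₀, OutDegIn N.src A₀ v = 0 ↔ v ∈ N.leaves) ∧
    Function.Injective φV ∧
    (∀ v' : V', φV v' ∈ V₀) ∧
    (∀ x : X, φV (T.leafEmb x) = N.leafEmb x) ∧
    p₀.Nodup ∧ (∀ a ∈ p₀, a ∈ A₀) ∧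
    ArcWalk N.src N.tgt r₀ p₀ (φV T.root) ∧
    (∀ a ∈ p₀, OutDegIn N.src A₀ (N.src a) = 1 ∧ N.src a ∉ Set.range φV) ∧
    (∀ e : A', φA e ≠ [] ∧ (φA e).Nodup ∧ (∀ a ∈ φA e, a ∈ A₀) ∧
      ArcWalk N.src N.tgt (φV (T.src e)) (φA e) (φV (T.tgt e)) ∧
      ∀ a ∈ (φA e).dropLast, N.tgt a ∉ Set.range φV) ∧
    (∀ a ∈ A₀, (a ∈ p₀ ∧ ∀ e : A', a ∉ φA e) ∨ (a ∉ p₀ ∧ ∃! e : A', a ∈ φA e))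

/-- The vertices of `N` having a directed path (possibly trivial) to a vertex in `L`. -/
def KeepV {X : Type u1} {V : Type u2} {A : Type u3}
    (N : PhyloNetwork X V A) (L : Set V) : Set V :=
  {v : V | ∃ (p : List A) (w : V), w ∈ L ∧ ArcWalk N.src N.tgt v p w}

/-- The arcs of `N` lying on a directed path ending at a vertex in `L`. -/
def KeepA {X : Type u1} {V : Type u2} {A : Type u3}
    (N : PhyloNetwork X V A) (L : Set V) : Set A :=
  {a : A | ∃ (p : List A) (w : V), w ∈ L ∧ ArcWalk N.src N.tgt (N.tgt a) p w}


section AuxLemmas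

variable {V : Type u2} {A : Type u3} {s t : A → V}

lemma ArcWalk.eq_of_nil' {u v : V} (h : ArcWalk s t u [] v) : u = v := by cases h; rfl

lemma ArcWalk.src_head' {u v : V} {a : A} {p : List A} (h : ArcWalk s t u (a :: p) v) :
    s a = u := by cases h; assumption

lemma ArcWalk.append' : ∀ {p : List A} {u v w : V} {q : List A}, ArcWalk s t u p v →
    ArcWalk s t v q w → ArcWalk s t u (p ++ q) w := by
  intro p
  induction p with
  | nil =>
    intro u v w q h1 h2
    rw [h1.eq_of_nil']; simpa using h2
  | cons a p ih =>
    intro u v w q h1 h2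
    cases h1 with
    | cons hs hw => exact .cons hs (ih hw h2)

lemma ArcWalk.exists_last' : ∀ {p : List A} {u v : V}, ArcWalk s t u p v → p ≠ [] →
    ∃ a ∈ p, t a = v := by
  intro p
  induction p with
  | nil => intro _ _ _ h; exact absurd rfl h
  | cons a p ih =>
    intro u v h _
    cases h with
    | cons hs hw =>
      by_cases hp : p = []
      · subst hp; exact ⟨a, by simp, hw.eq_of_nil'⟩
      · obtain ⟨b, hb, hbv⟩ := ih hw hp
        exact ⟨b, by simp [hb], hbv⟩

/-- In a rooted tree, at most one tree arc enters each vertex. -/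
lemma tree_in_unique {S : Set A} {r : V} (hT : IsRootedTree s t S r) {b c : A}
    (hb : b ∈ S) (hc : c ∈ S) (hbc : t b = t c) : b = c := by
  obtain ⟨pb, ⟨hpb1, hpb2⟩, -⟩ := hT (s b)
  obtain ⟨pc, ⟨hpc1, hpc2⟩, -⟩ := hT (s c)
  obtain ⟨p, -, hup⟩ := hT (t b)
  have wb : ArcWalk s t r (pb ++ [b]) (t b) :=
    hpb2.append' (.cons rfl (.nil _))
  have wc : ArcWalk s t r (pc ++ [c]) (t b) := by
    rw [hbc]; exact hpc2.append' (.cons rfl (.nil _))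
  have m1 : ∀ a ∈ pb ++ [b], a ∈ S := by
    intro a ha
    rcases List.mem_append.mp ha with h | h
    · exact hpb1 a h
    · rw [List.mem_singleton] at h; subst h; exact hb
  have m2 : ∀ a ∈ pc ++ [c], a ∈ S := by
    intro a ha
    rcases List.mem_append.mp ha with h | h
    · exact hpc1 a h
    · rw [List.mem_singleton] at h; subst h; exact hc
  have e1 : pb ++ [b] = p := hup _ ⟨m1, wb⟩
  have e2 : pc ++ [c] = p := hup _ ⟨m2, wc⟩
  have h3 := congrArg List.getLast? (e1.trans e2.symm)
  simpa using h3

lemma mem_of_ncard_two {α : Type*} {S : Set α} (h : S.ncard = 2) {a b : α}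
    (ha : a ∈ S) (hb : b ∈ S) (hab : a ≠ b) : ∀ z ∈ S, z = a ∨ z = b := by
  obtain ⟨x, y, hxy, rfl⟩ := Set.ncard_eq_two.mp h
  simp only [Set.mem_insert_iff, Set.mem_singleton_iff] at ha hb ⊢
  intro z hz
  rcases ha with rfl | rfl <;> rcases hb with rfl | rfl <;> tauto

lemma exists_two_of_ncard {α : Type*} {S : Set α} (h : S.ncard = 2) :
    ∃ a ∈ S, ∃ b ∈ S, a ≠ b := by
  obtain ⟨x, y, hxy, rfl⟩ := Set.ncard_eq_two.mp h
  exact ⟨x, by simp, y, by simp, hxy⟩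

lemma eq_singleton_of_ncard_one {α : Type*} {S : Set α} (h : S.ncard = 1) {a : α}
    (ha : a ∈ S) : S = {a} := by
  obtain ⟨x, rfl⟩ := Set.ncard_eq_one.mp h
  rw [Set.mem_singleton_iff] at ha; subst ha; rfl

end AuxLemmas

section DegLemmas

variable {X : Type u1} {V : Type u2} {A : Type u3}

lemma mem_ne_zero_ncard {α : Type*} [Finite α] {S : Set α} {a : α} (ha : a ∈ S) :
    S.ncard ≠ 0 := by
  intro h
  rw [Set.ncard_eq_zero S.toFinite] at h
  rw [h] at ha
  exact ha

/-- If `v` is not a leaf of `N` and has some incident structure, degree facts. -/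
lemma PhyloNetwork.notleaf_outdeg (N : PhyloNetwork X V A) {v : V} (h : v ∉ N.leaves) :
    OutDeg N.src v = 1 ∨ OutDeg N.src v = 2 := by
  have hx : ¬ ∃ x : X, N.leafEmb x = v := by
    rintro ⟨x, rfl⟩; exact h ⟨x, rfl⟩
  by_cases hr : v = N.root
  · subst hr; exact N.root_outdeg
  · rcases N.deg_other v hr hx with ⟨-, h2⟩ | ⟨-, h2⟩
    · exact Or.inl h2
    · exact Or.inr h2

lemma PhyloNetwork.leaf_outdeg_zero (N : PhyloNetwork X V A) {v : V} (h : v ∈ N.leaves) :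
    OutDeg N.src v = 0 := (N.leaf_iff v).mp h

/-- Every arc not in a support tree has source of out-degree 2 and target of
in-degree 2. -/
lemma PhyloNetwork.comp_deg (N : PhyloNetwork X V A) {S : Set A}
    (hS : N.IsSupportTree S) {a : A} (ha : a ∉ S) :
    OutDeg N.src (N.src a) = 2 ∧ InDeg N.tgt (N.tgt a) = 2 := by
  have : Finite A := N.finA
  have hmem : a ∈ {c : A | N.src c = N.src a} := rfl
  have hnl : N.src a ∉ N.leaves := by
    intro h
    exact mem_ne_zero_ncard hmem (N.leaf_outdeg_zero h)
  have hout : OutDeg N.src (N.src a) ≠ 1 := by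
    intro h1
    have hsingle : {c : A | N.src c = N.src a} = {a} := eq_singleton_of_ncard_one h1 hmem
    have hzero : OutDegIn N.src S (N.src a) = 0 := by
      have : {c : A | c ∈ S ∧ N.src c = N.src a} = ∅ := by
        ext c
        simp only [Set.mem_setOf_eq, Set.mem_empty_iff_false, iff_false, not_and]
        intro hcS hc
        have : c ∈ ({a} : Set A) := hsingle ▸ hc
        rw [Set.mem_singleton_iff] at this; subst this
        exact ha hcS
      rw [OutDegIn, this, Set.ncard_empty]
    have := (hS.2 (N.src a)).mp hzero
    rw [N.leaf_outdeg_zero this] at h1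
    exact absurd h1 (by norm_num)
  have h1 : OutDeg N.src (N.src a) = 2 := by
    rcases N.notleaf_outdeg hnl with h | h
    · exact absurd h hout
    · exact h
  refine ⟨h1, ?_⟩
  have hmem' : a ∈ {c : A | N.tgt c = N.tgt a} := rfl
  have hnr : N.tgt a ≠ N.root := by
    intro h
    exact mem_ne_zero_ncard hmem' (h ▸ N.root_indeg)
  have hin : InDeg N.tgt (N.tgt a) ≠ 1 := by
    intro h1
    have hsingle : {c : A | N.tgt c = N.tgt a} = {a} := eq_singleton_of_ncard_one h1 hmem'
    obtain ⟨p, ⟨hpS, hpw⟩, -⟩ := hS.1 (N.tgt a)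
    have hp : p ≠ [] := by
      intro h; subst h
      exact hnr hpw.eq_of_nil'.symm
    obtain ⟨c, hc, hcv⟩ := hpw.exists_last' hp
    have : c ∈ ({a} : Set A) := hsingle ▸ hcv
    rw [Set.mem_singleton_iff] at this; subst this
    exact ha (hpS _ hc)
  have hnl' : N.tgt a ∉ N.leaves := by
    rintro ⟨x, hx⟩
    exact hin (hx ▸ N.leaf_indeg x)
  have hx : ¬ ∃ x : X, N.leafEmb x = N.tgt a := by
    rintro ⟨x, hx⟩; exact hnl' ⟨x, hx⟩
  rcases N.deg_other _ hnr hx with ⟨h2, -⟩ | ⟨h2, -⟩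
  · exact h2
  · exact absurd h2 hin

end DegLemmas

/-- `N` is tree-based iff there is an independent set `I` of arcs of
`N` such that `(V, A − I)` is a rooted directed tree with root `ρ`. -/
theorem statement_3 {X : Type u1} {V : Type u2} {A : Type u3} (N : PhyloNetwork X V A) :
    N.TreeBased ↔
      ∃ I : Set A, IndepArcs N.src N.tgt I ∧
        IsRootedTree N.src N.tgt {a : A | a ∉ I} N.root := by
  have : Finite A := N.finA
  constructor
  · rintro ⟨S, hS⟩
    refine ⟨{a : A | a ∉ S}, ?_, ?_⟩
    · intro a ha b hb hab
      simp only [Set.mem_setOf_eq] at ha hb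
      obtain ⟨has, hat⟩ := N.comp_deg hS ha
      obtain ⟨hbs, hbt⟩ := N.comp_deg hS hb
      have mixed : ∀ v : V, OutDeg N.src v = 2 → InDeg N.tgt v = 2 → False := by
        intro v h1 h2
        have hnr : v ≠ N.root := by
          intro h; rw [h, N.root_indeg] at h2; exact absurd h2 (by norm_num)
        have hx : ¬ ∃ x : X, N.leafEmb x = v := by
          rintro ⟨x, rfl⟩
          rw [N.leaf_outdeg_zero ⟨x, rfl⟩] at h1
          exact absurd h1 (by norm_num)
        rcases N.deg_other v hnr hx with ⟨-, h3⟩ | ⟨h3, -⟩ <;> omega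
      refine ⟨?_, ?_, ?_, ?_⟩
      · -- s a ≠ s b
        intro h
        have hbmem : b ∈ {c : A | N.src c = N.src a} := h.symm
        have hamem : a ∈ {c : A | N.src c = N.src a} := rfl
        have hall := mem_of_ncard_two has hamem hbmem hab
        have hzero : OutDegIn N.src S (N.src a) = 0 := by
          have : {c : A | c ∈ S ∧ N.src c = N.src a} = ∅ := by
            ext c
            simp only [Set.mem_setOf_eq, Set.mem_empty_iff_false, iff_false, not_and]
            intro hcS hc
            rcases hall c hc with rfl | rfl
            · exact ha hcS
            · exact hb hcS
          rw [OutDegIn, this, Set.ncard_empty]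
        have hleaf := (hS.2 (N.src a)).mp hzero
        rw [N.leaf_outdeg_zero hleaf] at has
        exact absurd has (by norm_num)
      · exact fun h => mixed _ has (h ▸ hbt)
      · exact fun h => mixed _ (h ▸ hbs) hat
      · -- t a ≠ t b
        intro h
        have hbmem : b ∈ {c : A | N.tgt c = N.tgt a} := h.symm
        have hamem : a ∈ {c : A | N.tgt c = N.tgt a} := rfl
        have hall := mem_of_ncard_two hat hamem hbmem hab
        have hnr : N.tgt a ≠ N.root := by
          intro h'; rw [h', N.root_indeg] at hat; exact absurd hat (by norm_num)
        obtain ⟨p, ⟨hpS, hpw⟩, -⟩ := hS.1 (N.tgt a)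
        have hp : p ≠ [] := by
          intro h'; subst h'
          exact hnr hpw.eq_of_nil'.symm
        obtain ⟨c, hc, hcv⟩ := hpw.exists_last' hp
        rcases hall c hcv with rfl | rfl
        · exact ha (hpS _ hc)
        · exact hb (hpS _ hc)
    · have hset : {a : A | a ∉ {a : A | a ∉ S}} = S := by
        ext a; simp
      rw [hset]
      exact hS.1
  · rintro ⟨I, hI, hT⟩
    refine ⟨{a : A | a ∉ I}, hT, ?_⟩
    intro v
    constructor
    · intro h0
      have hout : ∀ c : A, N.src c = v → c ∈ I := by
        intro c hc
        by_contra hcI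
        have hcmem : c ∈ {a : A | a ∈ {a : A | a ∉ I} ∧ N.src a = v} := ⟨hcI, hc⟩
        exact mem_ne_zero_ncard hcmem h0
      by_contra hnl
      rcases N.notleaf_outdeg hnl with h1 | h2
      · -- out-degree 1
        obtain ⟨x, hx⟩ := Set.ncard_eq_one.mp h1
        have hxv : N.src x = v := by
          have : x ∈ {c : A | N.src c = v} := hx ▸ Set.mem_singleton x
          exact this
        have hxI : x ∈ I := hout x hxv
        by_cases hr : v = N.root
        · -- root with its only outgoing arc removed
          have htr : N.tgt x ≠ N.root := by
            intro h
            exact mem_ne_zero_ncard (show x ∈ {c : A | N.tgt c = N.tgt x} from rfl)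
              (h ▸ N.root_indeg)
          obtain ⟨p, ⟨hpS, hpw⟩, -⟩ := hT (N.tgt x)
          have hp : p ≠ [] := by
            intro h; subst h
            exact htr hpw.eq_of_nil'.symm
          obtain ⟨c, q, rfl⟩ := List.exists_cons_of_ne_nil hp
          have hcsrc : N.src c = N.root := hpw.src_head'
          have : c ∈ ({x} : Set A) := by
            rw [← hx]; show N.src c = v; rw [hcsrc, hr]
          rw [Set.mem_singleton_iff] at this; subst this
          exact (hpS c (by simp)) hxI
        · -- non-root with out-degree 1: in-degree 2
          have hxne : ¬ ∃ y : X, N.leafEmb y = v := by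
            rintro ⟨y, rfl⟩; exact hnl ⟨y, rfl⟩
          have hin2 : InDeg N.tgt v = 2 := by
            rcases N.deg_other v hr hxne with ⟨h', -⟩ | ⟨-, h'⟩
            · exact h'
            · omega
          obtain ⟨b, hb, c, hc, hbc⟩ := exists_two_of_ncard hin2
          have hbv : N.tgt b = v := hb
          have hcv : N.tgt c = v := hc
          have hnb : ∀ d : A, N.tgt d = v → d ∉ I := by
            intro d hd hdI
            have hdx : d ≠ x := by
              intro h; subst h
              -- self-loop: src d = v = tgt d
              have : ArcWalk N.src N.tgt v [d] v := by
                refine .cons hxv ?_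
                rw [hd]; exact .nil v
              exact N.acyclic v [d] (by simp) this
            have := (hI x hxI d hdI (Ne.symm hdx)).2.1
            rw [hxv, hd] at this
            exact this rfl
          have hbS : b ∈ {a : A | a ∉ I} := hnb b hbv
          have hcS : c ∈ {a : A | a ∉ I} := hnb c hcv
          exact hbc (tree_in_unique hT hbS hcS (hbv.trans hcv.symm))
      · -- out-degree 2: both outgoing arcs in I violate independence
        obtain ⟨b, hb, c, hc, hbc⟩ := exists_two_of_ncard h2
        have hbv : N.src b = v := hb
        have hcv : N.src c = v := hc
        have := (hI b (hout b hbv) c (hout c hcv) hbc).1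
        rw [hbv, hcv] at this
        exact this rfl
    · intro hleaf
      have h0 : OutDeg N.src v = 0 := N.leaf_outdeg_zero hleaf
      rw [OutDeg, Set.ncard_eq_zero (Set.toFinite _)] at h0
      have : {a : A | a ∈ {a : A | a ∉ I} ∧ N.src a = v} = ∅ := by
        ext c
        simp only [Set.mem_setOf_eq, Set.mem_empty_iff_false, iff_false, not_and]
        intro _ hc
        have : c ∈ ({} : Set A) := h0 ▸ hc
        exact this
      rw [OutDegIn, this, Set.ncard_empty]
end

section
/- Let N = (V, A) be a binary phylogenetic network over a finite leaf set X with root ρ, and let S be a support tree for N. Then the set A − S of linking arcs is independent (no two distinct arcs of A − S share a vertex); moreover, no arc of A − S lies in S₁, i.e., every linking arc has source of out-degree 2 and target of in-degree 2 in N. -/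
/-! Directed multigraphs, walks, and binary phylogenetic networks
(following Francis & Steel, "Which phylogenetic networks are merely
trees with additional arcs?"). -/

universe u1 u2 u3 u4 u5 u6 u7

lemma arcwalk_nil_eq {V : Type u2} {A : Type u3} {s t : A → V} {u v : V}
    (h : ArcWalk s t u [] v) : u = v := by
  cases h; rfl

lemma arcwalk_last {V : Type u2} {A : Type u3} {s t : A → V} {u v : V} {p : List A}
    (h : ArcWalk s t u p v) (hp : p ≠ []) : ∃ a ∈ p, t a = v := by
  induction h with
  | nil => exact absurd rfl hp
  | @cons u' w a q hs hw ih =>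
    cases q with
    | nil => exact ⟨a, by simp, arcwalk_nil_eq hw⟩
    | cons b r =>
      obtain ⟨c, hc, hct⟩ := ih (by simp)
      exact ⟨c, by simp [hc], hct⟩

/-- If `S` is a support tree for `N`, then the set `A − S` of linking
arcs is independent, and no linking arc lies in `S₁`: every linking arc has source of
out-degree 2 and target of in-degree 2 in `N`. -/
theorem statement_5 {X : Type u1} {V : Type u2} {A : Type u3} (N : PhyloNetwork X V A)
    (S : Set A) (hS : N.IsSupportTree S) :
    IndepArcs N.src N.tgt {a : A | a ∉ S} ∧
    ∀ a : A, a ∉ S →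
      a ∉ N.S1 ∧ OutDeg N.src (N.src a) = 2 ∧ InDeg N.tgt (N.tgt a) = 2 := by
  have finA := N.finA
  -- every non-root vertex has an incoming arc in S
  have root_in : ∀ v : V, v ≠ N.root → ∃ c ∈ S, N.tgt c = v := by
    intro v hv
    obtain ⟨p, ⟨hpS, hw⟩, -⟩ := hS.1 v
    cases p with
    | nil => exact absurd (arcwalk_nil_eq hw).symm hv
    | cons b r =>
      obtain ⟨c, hc, hct⟩ := arcwalk_last hw (by simp)
      exact ⟨c, hpS c hc, hct⟩
  have not_root : ∀ a : A, N.tgt a ≠ N.root := by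
    intro a ha
    have h0 := N.root_indeg
    rw [InDeg, Set.ncard_eq_zero (Set.toFinite _)] at h0
    exact absurd h0 (Set.nonempty_iff_ne_empty.mp ⟨a, ha⟩)
  -- key degree facts for linking arcs
  have key : ∀ a : A, a ∉ S → OutDeg N.src (N.src a) = 2 ∧ InDeg N.tgt (N.tgt a) = 2 := by
    intro a haS
    constructor
    · -- out-degree of source
      set u := N.src a with hu
      have hnl : ¬ ∃ x : X, N.leafEmb x = u := by
        intro hx
        have h0 := (N.leaf_iff u).mp hx
        rw [OutDeg, Set.ncard_eq_zero (Set.toFinite _)] at h0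
        exact absurd h0 (Set.nonempty_iff_ne_empty.mp ⟨a, rfl⟩)
      have h1 : OutDeg N.src u ≠ 1 := by
        intro h1
        obtain ⟨b, hb⟩ := Set.ncard_eq_one.mp h1
        have hab : a ∈ ({b} : Set A) := hb ▸ (rfl : N.src a = u)
        have hdeg0 : OutDegIn N.src S u = 0 := by
          rw [OutDegIn, Set.ncard_eq_zero (Set.toFinite _)]
          ext c
          simp only [Set.mem_setOf_eq, Set.mem_empty_iff_false, iff_false, not_and]
          intro hcS hcu
          have : c ∈ ({b} : Set A) := hb ▸ hcu
          rw [Set.mem_singleton_iff] at this hab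
          exact haS (by rwa [show c = a from this.trans hab.symm] at hcS)
        have := (hS.2 u).mp hdeg0
        exact hnl (by obtain ⟨x, hx⟩ := this; exact ⟨x, hx⟩)
      by_cases hr : u = N.root
      · rcases N.root_outdeg with h | h
        · exact absurd (hr ▸ h) h1
        · exact hr ▸ h
      · rcases N.deg_other u hr hnl with ⟨-, h⟩ | ⟨-, h⟩
        · exact absurd h h1
        · exact h
    · -- in-degree of target
      set v := N.tgt a with hv
      have hvr : v ≠ N.root := not_root a
      obtain ⟨c, hcS, hc⟩ := root_in v hvr
      have hca : c ≠ a := fun h => haS (h ▸ hcS)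
      have h2 : 2 ≤ InDeg N.tgt v := by
        have hsub : ({c, a} : Set A) ⊆ {x : A | N.tgt x = v} := by
          intro x hx
          rcases hx with rfl | rfl
          · exact hc
          · rfl
        calc 2 = ({c, a} : Set A).ncard := (Set.ncard_pair hca).symm
          _ ≤ _ := Set.ncard_le_ncard hsub (Set.toFinite _)
      have hnl : ¬ ∃ x : X, N.leafEmb x = v := by
        rintro ⟨x, hx⟩
        have := N.leaf_indeg x
        rw [hx] at this
        omega
      rcases N.deg_other v hvr hnl with ⟨h, -⟩ | ⟨h, -⟩
      · exact h
      · omega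
  refine ⟨?_, fun a ha => ⟨?_, (key a ha).1, (key a ha).2⟩⟩
  · -- independence
    intro a ha b hb hab
    simp only [Set.mem_setOf_eq] at ha hb
    obtain ⟨hao, hai⟩ := key a ha
    obtain ⟨hbo, hbi⟩ := key b hb
    have mixed : ∀ x y : A, x ∉ S → y ∉ S → N.src x ≠ N.tgt y := by
      intro x y hx hy hxy
      obtain ⟨hxo, -⟩ := key x hx
      obtain ⟨-, hyi⟩ := key y hy
      set u := N.src x with hu
      have hur : u ≠ N.root := hxy ▸ not_root y
      have hnl : ¬ ∃ z : X, N.leafEmb z = u := by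
        intro hz
        have h0 := (N.leaf_iff u).mp hz
        omega
      rw [hxy] at hxo
      rcases N.deg_other (N.tgt y) (hxy ▸ hur) (hxy ▸ hnl) with ⟨-, h⟩ | ⟨h, -⟩ <;> omega
    refine ⟨?_, mixed a b ha hb, fun h => mixed b a hb ha h.symm, ?_⟩
    · -- sources distinct
      intro h
      set u := N.src a with hu
      have hset : {x : A | N.src x = u} = {a, b} := by
        refine (Set.eq_of_subset_of_ncard_le ?_ ?_ (Set.toFinite _)).symm
        · rintro x (rfl | rfl)
          · rfl
          · exact h.symm
        · rw [Set.ncard_pair hab]; exact le_of_eq hao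
      have hdeg0 : OutDegIn N.src S u = 0 := by
        rw [OutDegIn, Set.ncard_eq_zero (Set.toFinite _)]
        ext c
        simp only [Set.mem_setOf_eq, Set.mem_empty_iff_false, iff_false, not_and]
        intro hcS hcu
        have : c ∈ ({a, b} : Set A) := hset ▸ hcu
        rcases this with rfl | rfl
        · exact ha hcS
        · exact hb hcS
      have hleaf := (hS.2 u).mp hdeg0
      obtain ⟨x, hx⟩ := hleaf
      have h0 := (N.leaf_iff u).mp ⟨x, hx⟩
      omega
    · -- targets distinct
      intro h
      set v := N.tgt a with hv
      have hset : {x : A | N.tgt x = v} = {a, b} := by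
        refine (Set.eq_of_subset_of_ncard_le ?_ ?_ (Set.toFinite _)).symm
        · rintro x (rfl | rfl)
          · rfl
          · exact h.symm
        · rw [Set.ncard_pair hab]; exact le_of_eq hai
      obtain ⟨c, hcS, hc⟩ := root_in v (not_root a)
      have : c ∈ ({a, b} : Set A) := hset ▸ hc
      rcases this with rfl | rfl
      · exact ha hcS
      · exact hb hcS
  · -- not in S₁
    intro hS1
    rcases hS1 with h | h
    · have := (key a ha).1; omega
    · have := (key a ha).2; omega
end
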